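/- arXiv:1806.11208 — 3 statements merged into one kernel-verified Lean document; each statement's English description precedes it below -/
import Mathlib

section
/- The number of symmetric noncrossing perfect matchings on the set {±1, ±2, ..., ±n} equals the central binomial coefficient C(n, ⌊n/2⌋). -/
/-- The set `{±1, ..., ±n} ⊆ ℤ`. -/
noncomputable def pmSet (n : ℕ) : Finset ℤ := (Finset.Icc (-(n : ℤ)) n).erase 0

/-- `M` is a noncrossing symmetric perfect matching on `{±1, ..., ±n}`:
a set of pairwise disjoint 2-element blocks with union `{±1, ..., ±n}`,
closed under negation, with no two blocks `{i,j}`, `{a,b}` satisfying `i < a < j < b`. -/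
def IsNCSP (n : ℕ) (M : Finset (Finset ℤ)) : Prop :=
  (∀ B ∈ M, B.card = 2) ∧
  ((M : Set (Finset ℤ)).Pairwise fun B B' => Disjoint B B') ∧
  M.biUnion id = pmSet n ∧
  (∀ B ∈ M, B.image (fun x => -x) ∈ M) ∧
  (∀ B ∈ M, ∀ B' ∈ M, ∀ i ∈ B, ∀ j ∈ B, ∀ a ∈ B', ∀ b ∈ B',
    ¬ (i < a ∧ a < j ∧ j < b))

open Finset Pointwise

/-!
Call `x > 0` a fixed point of `M` when `{-x, x} ∈ M`. A matching in `NCSP(n + 1)` either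
contains `{-(n + 1), n + 1}`, and removing it leaves a matching in `NCSP(n)` with one fixed point
fewer, or it pairs `n + 1` with some `j > 0`, and replacing `{j, n + 1}` and `{-j, -(n + 1)}` by
`{-j, j}` leaves a matching in `NCSP(n)` with one fixed point more, of which `j` is the largest
fixed point. Conversely, closing the largest fixed block `{-j, j}` of a matching in `NCSP(n)` into
`{j, n + 1}` and `{-j, -(n + 1)}` creates no crossing, because no block straddles `j`. So the
number `T(n, k)` of matchings in `NCSP(n)` with at least `k` fixed points satisfies
`T(n + 1, k) = T(n, k - 1) + T(n, k + 1)` (with `k - 1` truncated at `0`) and `T(0, k) = [k = 0]`,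
which is Pascal's rule for `T(n, k) = C(n, ⌊(n + k + 1) / 2⌋)`. For `k = 0` this is
`C(n, ⌈n / 2⌉) = C(n, ⌊n / 2⌋)`.
-/

def Straddles (B : Finset ℤ) (x : ℤ) : Prop := ∃ a ∈ B, ∃ b ∈ B, a < x ∧ x < b

def Crosses (B B' : Finset ℤ) : Prop :=
  ∃ i ∈ B, ∃ j ∈ B, ∃ a ∈ B', ∃ b ∈ B', i < a ∧ a < j ∧ j < b

def Noncrossing (M : Finset (Finset ℤ)) : Prop := ∀ B ∈ M, ∀ B' ∈ M, ¬ Crosses B B'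

structure IsSymmPerfectMatching (S : Finset ℤ) (M : Finset (Finset ℤ)) : Prop where
  card_eq_two : ∀ B ∈ M, B.card = 2
  pairwise_disjoint : (M : Set (Finset ℤ)).Pairwise Disjoint
  biUnion_eq : M.biUnion id = S
  neg_mem : ∀ B ∈ M, -B ∈ M

theorem isNCSP_iff {n : ℕ} {M : Finset (Finset ℤ)} :
    IsNCSP n M ↔ IsSymmPerfectMatching (pmSet n) M ∧ Noncrossing M := by
  constructor
  · rintro ⟨h₁, h₂, h₃, h₄, h₅⟩
    exact ⟨⟨h₁, h₂, h₃, h₄⟩, fun B hB B' hB' ⟨i, hi, j, hj, a, ha, b, hb, h⟩ =>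
      h₅ B hB B' hB' i hi j hj a ha b hb h⟩
  · rintro ⟨⟨h₁, h₂, h₃, h₄⟩, h₅⟩
    exact ⟨h₁, h₂, h₃, h₄, fun B hB B' hB' i hi j hj a ha b hb h =>
      h₅ B hB B' hB' ⟨i, hi, j, hj, a, ha, b, hb, h⟩⟩

@[simp]
theorem mem_pmSet {n : ℕ} {x : ℤ} : x ∈ pmSet n ↔ x ≠ 0 ∧ -(n : ℤ) ≤ x ∧ x ≤ n := by
  simp [pmSet]

theorem pair_eq_pair_iff {a b c d : ℤ} :
    ({a, b} : Finset ℤ) = {c, d} ↔ a = c ∧ b = d ∨ a = d ∧ b = c := by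
  constructor
  · intro h
    have h₁ : a ∈ ({c, d} : Finset ℤ) := h ▸ by simp
    have h₂ : b ∈ ({c, d} : Finset ℤ) := h ▸ by simp
    have h₃ : c ∈ ({a, b} : Finset ℤ) := h ▸ by simp
    have h₄ : d ∈ ({a, b} : Finset ℤ) := h ▸ by simp
    simp only [mem_insert, mem_singleton] at h₁ h₂ h₃ h₄
    omega
  · rintro (⟨rfl, rfl⟩ | ⟨rfl, rfl⟩)
    exacts [rfl, pair_comm _ _]

section Straddles

variable {B B' : Finset ℤ} {x : ℤ}

theorem straddles_pair_iff {a b : ℤ} :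
    Straddles {a, b} x ↔ a < x ∧ x < b ∨ b < x ∧ x < a := by
  simp only [Straddles, mem_insert, mem_singleton, exists_eq_or_imp, exists_eq_left]
  omega

theorem straddles_neg_iff : Straddles (-B) x ↔ Straddles B (-x) := by
  simp only [Straddles, mem_neg']
  constructor
  · rintro ⟨a, ha, b, hb, hax, hxb⟩
    exact ⟨-b, hb, -a, ha, by omega, by omega⟩
  · rintro ⟨a, ha, b, hb, hax, hxb⟩
    exact ⟨-b, by rwa [neg_neg], -a, by rwa [neg_neg], by omega, by omega⟩

theorem Crosses.exists_straddles_left (h : Crosses B B') : ∃ x ∈ B, Straddles B' x := by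
  obtain ⟨-, -, j, hj, a, ha, b, hb, -, haj, hjb⟩ := h
  exact ⟨j, hj, a, ha, b, hb, haj, hjb⟩

theorem Crosses.exists_straddles_right (h : Crosses B B') : ∃ x ∈ B', Straddles B x := by
  obtain ⟨i, hi, j, hj, a, ha, -, -, hia, haj, -⟩ := h
  exact ⟨a, ha, i, hi, j, hj, hia, haj⟩

end Straddles

def insertWithNeg (B : Finset ℤ) (M : Finset (Finset ℤ)) : Finset (Finset ℤ) :=
  insert B (insert (-B) M)

def eraseWithNeg (B : Finset ℤ) (M : Finset (Finset ℤ)) : Finset (Finset ℤ) :=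
  (M.erase B).erase (-B)

section Pairs

variable {B C : Finset ℤ} {M : Finset (Finset ℤ)}

theorem mem_insertWithNeg : C ∈ insertWithNeg B M ↔ C = B ∨ C = -B ∨ C ∈ M := by
  simp [insertWithNeg]

theorem mem_eraseWithNeg : C ∈ eraseWithNeg B M ↔ C ≠ -B ∧ C ≠ B ∧ C ∈ M := by
  simp [eraseWithNeg]

theorem eraseWithNeg_subset : eraseWithNeg B M ⊆ M := fun _ hC => (mem_eraseWithNeg.mp hC).2.2

theorem eraseWithNeg_insertWithNeg (hB : B ∉ M) (hB' : -B ∉ M) :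
    eraseWithNeg B (insertWithNeg B M) = M := by
  ext C
  simp only [mem_eraseWithNeg, mem_insertWithNeg]
  constructor
  · rintro ⟨h₁, h₂, h₃ | h₃ | h₃⟩
    exacts [absurd h₃ h₂, absurd h₃ h₁, h₃]
  · intro hC
    exact ⟨fun h => hB' (h ▸ hC), fun h => hB (h ▸ hC), Or.inr (Or.inr hC)⟩

theorem insertWithNeg_eraseWithNeg (hB : B ∈ M) (hB' : -B ∈ M) :
    insertWithNeg B (eraseWithNeg B M) = M := by
  ext C
  simp only [mem_eraseWithNeg, mem_insertWithNeg]
  constructor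
  · rintro (rfl | rfl | ⟨-, -, hC⟩) <;> assumption
  · intro hC
    by_cases h₁ : C = B
    · exact Or.inl h₁
    by_cases h₂ : C = -B
    · exact Or.inr (Or.inl h₂)
    exact Or.inr (Or.inr ⟨h₂, h₁, hC⟩)

end Pairs

section Noncrossing

variable {B : Finset ℤ} {M M' : Finset (Finset ℤ)}

theorem Noncrossing.mono (h : Noncrossing M) (hsub : M' ⊆ M) : Noncrossing M' :=
  fun C hC C' hC' => h C (hsub hC) C' (hsub hC')

theorem Noncrossing.insert (hM : Noncrossing M)
    (hB : ∀ C ∈ insert B M, ∀ x ∈ B, ¬ Straddles C x) : Noncrossing (insert B M) := by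
  intro C hC C' hC' hcr
  rcases mem_insert.mp hC with rfl | hCM
  · obtain ⟨x, hx, hst⟩ := hcr.exists_straddles_left
    exact hB C' hC' x hx hst
  rcases mem_insert.mp hC' with rfl | hC'M
  · obtain ⟨x, hx, hst⟩ := hcr.exists_straddles_right
    exact hB C hC x hx hst
  exact hM C hCM C' hC'M hcr

/-- `C` straddles `-x` iff `-C` straddles `x`, so the points of `-B` need no separate check. -/
theorem Noncrossing.insertWithNeg (hM : Noncrossing M) (hneg : ∀ C ∈ M, -C ∈ M)
    (hold : ∀ C ∈ M, ∀ x ∈ B, ¬ Straddles C x)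
    (hB : ∀ x ∈ B, ¬ Straddles B x ∧ ¬ Straddles (-B) x) : Noncrossing (insertWithNeg B M) := by
  refine (hM.insert fun C hC x hx => ?_).insert fun C hC x hx => ?_
  · rw [mem_neg'] at hx
    rcases mem_insert.mp hC with rfl | hCM
    · rw [straddles_neg_iff]
      exact (hB _ hx).1
    · rw [← neg_neg C, straddles_neg_iff]
      exact hold _ (hneg C hCM) _ hx
  · rcases mem_insert.mp hC with rfl | hC
    · exact (hB x hx).1
    rcases mem_insert.mp hC with rfl | hCM
    · exact (hB x hx).2
    · exact hold C hCM x hx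

end Noncrossing

namespace IsSymmPerfectMatching

variable {S : Finset ℤ} {M : Finset (Finset ℤ)} {B B' : Finset ℤ} {x y : ℤ}

theorem mem_of_mem (hM : IsSymmPerfectMatching S M) (hB : B ∈ M) (hx : x ∈ B) : x ∈ S :=
  hM.biUnion_eq ▸ mem_biUnion.mpr ⟨B, hB, hx⟩

theorem exists_mem (hM : IsSymmPerfectMatching S M) (hx : x ∈ S) : ∃ B ∈ M, x ∈ B := by
  rw [← hM.biUnion_eq] at hx
  simpa using hx

theorem notMem_of_top_mem {n : ℕ} (hM : IsSymmPerfectMatching (pmSet n) M) (hB : (n + 1 : ℤ) ∈ B) :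
    B ∉ M := fun h => by
  have := mem_pmSet.mp (hM.mem_of_mem h hB)
  omega

theorem eq_of_mem_of_mem (hM : IsSymmPerfectMatching S M) (hB : B ∈ M) (hB' : B' ∈ M)
    (hx : x ∈ B) (hx' : x ∈ B') : B = B' := by
  by_contra hne
  exact disjoint_left.mp (hM.pairwise_disjoint hB hB' hne) hx hx'

theorem eq_pair (hM : IsSymmPerfectMatching S M) (hB : B ∈ M) (hx : x ∈ B) (hy : y ∈ B)
    (hxy : x ≠ y) : B = {x, y} :=
  (eq_of_subset_of_card_le (insert_subset hx (singleton_subset_iff.mpr hy))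
    (by rw [hM.card_eq_two B hB, card_pair hxy])).symm

theorem eq_of_pair_mem_of_pair_mem (hM : IsSymmPerfectMatching S M) {a b c : ℤ}
    (ha : {a, c} ∈ M) (hb : {b, c} ∈ M) : a = b := by
  have hac : a ≠ c := by
    rintro rfl
    simpa using hM.card_eq_two _ ha
  have := hM.eq_of_mem_of_mem ha hb (x := c) (by simp) (by simp)
  rw [pair_eq_pair_iff] at this
  omega

/-- Otherwise the block crosses its mirror image. -/
theorem eq_neg_of_neg_of_pos (hM : IsSymmPerfectMatching S M) (hnc : Noncrossing M) (hB : B ∈ M)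
    (hx : x ∈ B) (hy : y ∈ B) (hx0 : x < 0) (hy0 : 0 < y) : y = -x := by
  have hxB : -x ∈ -B := neg_mem_neg hx
  have hyB : -y ∈ -B := neg_mem_neg hy
  rcases lt_trichotomy y (-x) with h | h | h
  · exact absurd ⟨x, hx, y, hy, -y, hyB, -x, hxB, by omega, by omega, h⟩
      (hnc B hB (-B) (hM.neg_mem B hB))
  · exact h
  · exact absurd ⟨-y, hyB, -x, hxB, x, hx, y, hy, by omega, by omega, h⟩
      (hnc (-B) (hM.neg_mem B hB) B hB)

theorem eraseWithNeg (hM : IsSymmPerfectMatching S M) (hB : B ∈ M) :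
    IsSymmPerfectMatching (S \ (B ∪ -B)) (eraseWithNeg B M) where
  card_eq_two C hC := hM.card_eq_two C (eraseWithNeg_subset hC)
  pairwise_disjoint := hM.pairwise_disjoint.mono (by simpa using eraseWithNeg_subset)
  biUnion_eq := by
    ext x
    simp only [mem_biUnion, mem_eraseWithNeg, id, mem_sdiff, mem_union]
    constructor
    · rintro ⟨C, ⟨hCB', hCB, hC⟩, hx⟩
      refine ⟨hM.mem_of_mem hC hx, ?_⟩
      rintro (h | h)
      exacts [hCB (hM.eq_of_mem_of_mem hC hB hx h),
        hCB' (hM.eq_of_mem_of_mem hC (hM.neg_mem B hB) hx h)]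
    · rintro ⟨hx, hxB⟩
      obtain ⟨C, hC, hxC⟩ := hM.exists_mem hx
      exact ⟨C, ⟨by rintro rfl; exact hxB (Or.inr hxC), by rintro rfl; exact hxB (Or.inl hxC),
        hC⟩, hxC⟩
  neg_mem C hC := by
    obtain ⟨hCB', hCB, hC⟩ := mem_eraseWithNeg.mp hC
    refine mem_eraseWithNeg.mpr ⟨fun h => hCB (neg_injective h), fun h => hCB' ?_, hM.neg_mem C hC⟩
    rw [← h, neg_neg]

theorem insertWithNeg (hM : IsSymmPerfectMatching S M) (hB : B.card = 2) (hBS : Disjoint B S)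
    (hBS' : Disjoint (-B) S) (hBB : B = -B ∨ Disjoint B (-B)) :
    IsSymmPerfectMatching (S ∪ B ∪ -B) (insertWithNeg B M) where
  card_eq_two C hC := by
    rcases mem_insertWithNeg.mp hC with rfl | rfl | hC
    exacts [hB, by rw [card_neg, hB], hM.card_eq_two C hC]
  pairwise_disjoint := by
    have hdisj : ∀ C ∈ M, ∀ D, Disjoint D S → Disjoint D C := fun C hC D hD =>
      hD.mono_right fun x hx => hM.mem_of_mem hC hx
    simp only [_root_.insertWithNeg, coe_insert, Set.pairwise_insert, mem_coe, Set.mem_insert_iff]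
    refine ⟨⟨hM.pairwise_disjoint, fun C hC _ => ⟨hdisj C hC _ hBS', (hdisj C hC _ hBS').symm⟩⟩,
      ?_⟩
    rintro C (rfl | hC) hne
    · rcases hBB with h | h
      exacts [absurd h hne, ⟨h, h.symm⟩]
    · exact ⟨hdisj C hC _ hBS, (hdisj C hC _ hBS).symm⟩
  biUnion_eq := by
    simp only [_root_.insertWithNeg, biUnion_insert, hM.biUnion_eq, id]
    ac_rfl
  neg_mem C hC := by
    rcases mem_insertWithNeg.mp hC with rfl | rfl | hC
    · exact mem_insertWithNeg.mpr (Or.inr (Or.inl rfl))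
    · exact mem_insertWithNeg.mpr (Or.inl (neg_neg _))
    · exact mem_insertWithNeg.mpr (Or.inr (Or.inr (hM.neg_mem C hC)))

end IsSymmPerfectMatching

def fixedPts (M : Finset (Finset ℤ)) : Finset ℤ :=
  (M.biUnion id).filter fun x => 0 < x ∧ {-x, x} ∈ M

theorem mem_fixedPts {M : Finset (Finset ℤ)} {x : ℤ} : x ∈ fixedPts M ↔ 0 < x ∧ {-x, x} ∈ M := by
  simp only [fixedPts, mem_filter, mem_biUnion, id, and_iff_right_iff_imp]
  exact fun ⟨_, hx⟩ => ⟨_, hx, by simp⟩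

section

variable {S : Finset ℤ} {M : Finset (Finset ℤ)} {C : Finset ℤ} {j : ℤ}

theorem not_straddles_of_pair_mem {t : ℤ} (hnc : Noncrossing M) (hjt : {j, t} ∈ M) (hC : C ∈ M)
    (hCt : ∀ x ∈ C, x < t) : ¬ Straddles C j := fun ⟨a, ha, b, hb, haj, hjb⟩ =>
  hnc C hC _ hjt ⟨a, ha, b, hb, j, by simp, t, by simp, haj, hjb, hCt b hb⟩

/-- A block `{a, b}` with `a < j < b` would cross `{-j, j}` or, if `a < -j`, be a fixed block
`{-b, b}` with `j < b`. -/
theorem not_straddles_of_isGreatest_fixedPts (hM : IsSymmPerfectMatching S M) (hnc : Noncrossing M)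
    (hj : IsGreatest (fixedPts M : Set ℤ) j) (hC : C ∈ M) : ¬ Straddles C j := by
  rintro ⟨a, ha, b, hb, haj, hjb⟩
  obtain ⟨hj0, hjM⟩ := mem_fixedPts.mp hj.1
  rcases lt_trichotomy a (-j) with h | rfl | h
  · have hba := hM.eq_neg_of_neg_of_pos hnc hC ha hb (by omega) (by omega)
    have hb : b ∈ fixedPts M := by
      refine mem_fixedPts.mpr ⟨by omega, ?_⟩
      rwa [← hM.eq_pair hC (by rwa [hba, neg_neg]) hb (by omega)]
    exact absurd (hj.2 hb) (by omega)
  · have := hM.eq_of_mem_of_mem hC hjM ha (by simp)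
    have : b ∈ ({-j, j} : Finset ℤ) := this ▸ hb
    simp only [mem_insert, mem_singleton] at this
    omega
  · exact hnc _ hjM C hC ⟨-j, by simp, j, by simp, a, ha, b, hb, h, haj, hjb⟩

end

abbrev topPair (n : ℕ) : Finset ℤ := {-(n + 1 : ℤ), (n + 1 : ℤ)}

def closeAt (n : ℕ) (j : ℤ) (M : Finset (Finset ℤ)) : Finset (Finset ℤ) :=
  insertWithNeg {j, (n + 1 : ℤ)} (eraseWithNeg {-j, j} M)

def openAt (n : ℕ) (j : ℤ) (M : Finset (Finset ℤ)) : Finset (Finset ℤ) :=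
  insertWithNeg {-j, j} (eraseWithNeg {j, (n + 1 : ℤ)} M)

section Operations

variable {n : ℕ} {M : Finset (Finset ℤ)} {j : ℤ}

theorem isNCSP_insertWithNeg_top (h : IsNCSP n M) :
    IsNCSP (n + 1) (insertWithNeg (topPair n) M) := by
  obtain ⟨hM, hnc⟩ := isNCSP_iff.mp h
  refine isNCSP_iff.mpr ⟨?_, hnc.insertWithNeg hM.neg_mem ?_ ?_⟩
  · convert hM.insertWithNeg (B := topPair n) (card_pair (by omega)) ?_ ?_ (Or.inl ?_) using 1
    · ext x; simp; omega
    all_goals simp [topPair, pair_comm]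
  · rintro C hC x hx ⟨a, ha, b, hb, hax, hxb⟩
    have := mem_pmSet.mp (hM.mem_of_mem hC ha)
    have := mem_pmSet.mp (hM.mem_of_mem hC hb)
    simp only [mem_insert, mem_singleton] at hx
    omega
  · intro x hx
    simp only [mem_insert, mem_singleton] at hx
    simp [straddles_pair_iff]
    omega

theorem isNCSP_eraseWithNeg_top (h : IsNCSP (n + 1) M) (htop : topPair n ∈ M) :
    IsNCSP n (eraseWithNeg (topPair n) M) := by
  obtain ⟨hM, hnc⟩ := isNCSP_iff.mp h
  refine isNCSP_iff.mpr ⟨?_, hnc.mono eraseWithNeg_subset⟩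
  convert hM.eraseWithNeg htop using 1
  ext x; simp; omega

theorem isNCSP_closeAt (h : IsNCSP n M) (hj : IsGreatest (fixedPts M : Set ℤ) j) :
    IsNCSP (n + 1) (closeAt n j M) := by
  unfold closeAt
  obtain ⟨hM, hnc⟩ := isNCSP_iff.mp h
  obtain ⟨hj0, hjM⟩ := mem_fixedPts.mp hj.1
  have hjn := mem_pmSet.mp (hM.mem_of_mem hjM (by simp : j ∈ ({-j, j} : Finset ℤ)))
  have hR := hM.eraseWithNeg hjM
  refine isNCSP_iff.mpr ⟨?_, (hnc.mono eraseWithNeg_subset).insertWithNeg hR.neg_mem ?_ ?_⟩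
  · convert hR.insertWithNeg (B := {j, (n + 1 : ℤ)}) (card_pair (by omega)) ?_ ?_ (Or.inr ?_)
      using 1
    · ext x; simp; omega
    all_goals simp <;> omega
  · intro C hC x hx
    simp only [mem_insert, mem_singleton] at hx
    rcases hx with rfl | rfl
    · exact not_straddles_of_isGreatest_fixedPts hM hnc hj (eraseWithNeg_subset hC)
    · rintro ⟨a, -, b, hb, -, hxb⟩
      have := mem_pmSet.mp (hM.mem_of_mem (eraseWithNeg_subset hC) hb)
      omega
  · intro x hx
    simp only [mem_insert, mem_singleton] at hx
    simp [straddles_pair_iff]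
    omega

theorem isNCSP_openAt (h : IsNCSP (n + 1) M) (hjM : {j, (n + 1 : ℤ)} ∈ M) (hj0 : 0 < j) :
    IsNCSP n (openAt n j M) := by
  unfold openAt
  obtain ⟨hM, hnc⟩ := isNCSP_iff.mp h
  have hjn : j ≠ n + 1 := fun h => by simpa [h] using hM.card_eq_two _ hjM
  have hjn' := mem_pmSet.mp (hM.mem_of_mem hjM (by simp : j ∈ ({j, (n + 1 : ℤ)} : Finset ℤ)))
  have hR := hM.eraseWithNeg hjM
  have hlt : ∀ C ∈ eraseWithNeg {j, (n + 1 : ℤ)} M, ∀ x ∈ C, x < n + 1 := by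
    intro C hC x hx
    obtain ⟨-, hCj, hC⟩ := mem_eraseWithNeg.mp hC
    have := mem_pmSet.mp (hM.mem_of_mem hC hx)
    refine lt_of_le_of_ne (by push_cast at this; omega) ?_
    rintro rfl
    exact hCj (hM.eq_of_mem_of_mem hC hjM hx (by simp))
  refine isNCSP_iff.mpr ⟨?_, (hnc.mono eraseWithNeg_subset).insertWithNeg hR.neg_mem ?_ ?_⟩
  · convert hR.insertWithNeg (B := {-j, j}) (card_pair (by omega)) ?_ ?_ (Or.inl ?_) using 1
    · ext x; simp; omega
    all_goals simp [pair_comm]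
  · intro C hC x hx
    simp only [mem_insert, mem_singleton] at hx
    rcases hx with rfl | rfl
    · rw [← neg_neg C, straddles_neg_iff, neg_neg]
      exact not_straddles_of_pair_mem hnc hjM (eraseWithNeg_subset (hR.neg_mem C hC))
        (hlt _ (hR.neg_mem C hC))
    · exact not_straddles_of_pair_mem hnc hjM (eraseWithNeg_subset hC) (hlt C hC)
  · intro x hx
    simp only [mem_insert, mem_singleton] at hx
    simp [straddles_pair_iff]
    omega

theorem card_fixedPts_insertWithNeg_top (hM : IsSymmPerfectMatching (pmSet n) M) :
    (fixedPts (insertWithNeg (topPair n) M)).card = (fixedPts M).card + 1 := by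
  have htop : (n + 1 : ℤ) ∉ fixedPts M := fun h =>
    hM.notMem_of_top_mem (by simp) (mem_fixedPts.mp h).2
  rw [← card_insert_of_notMem htop]
  congr 1
  ext x
  simp only [topPair, mem_fixedPts, mem_insertWithNeg, mem_insert, neg_insert, neg_singleton,
    neg_neg, pair_eq_pair_iff]
  constructor
  · rintro ⟨hx, h | h | h⟩
    · exact Or.inl (by omega)
    · exact Or.inl (by omega)
    · exact Or.inr ⟨hx, h⟩
  · rintro (rfl | ⟨hx, h⟩)
    · exact ⟨by omega, Or.inl (by omega)⟩
    · exact ⟨hx, Or.inr (Or.inr h)⟩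

theorem card_fixedPts_closeAt (hj : j ∈ fixedPts M) :
    (fixedPts (closeAt n j M)).card = (fixedPts M).card - 1 := by
  have hj0 := (mem_fixedPts.mp hj).1
  rw [← card_erase_of_mem hj]
  congr 1
  ext x
  simp only [closeAt, mem_fixedPts, mem_insertWithNeg, mem_eraseWithNeg, mem_erase, neg_insert,
    neg_singleton, neg_neg, pair_eq_pair_iff, ne_eq]
  constructor
  · rintro ⟨hx, h | h | ⟨-, h, hM⟩⟩
    · omega
    · omega
    · exact ⟨by omega, hx, hM⟩
  · rintro ⟨hxj, hx, hM⟩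
    exact ⟨hx, Or.inr (Or.inr ⟨by omega, by omega, hM⟩)⟩

theorem fixedPts_openAt (hj0 : 0 < j) :
    fixedPts (openAt n j M) = insert j (fixedPts M) := by
  ext x
  simp only [openAt, mem_fixedPts, mem_insertWithNeg, mem_eraseWithNeg, mem_insert, neg_insert,
    neg_singleton, neg_neg, pair_eq_pair_iff, ne_eq]
  constructor
  · rintro ⟨hx, h | h | ⟨-, -, hM⟩⟩
    · exact Or.inl (by omega)
    · exact Or.inl (by omega)
    · exact Or.inr ⟨hx, hM⟩
  · rintro (rfl | ⟨hx, hM⟩)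
    · exact ⟨hj0, Or.inl (by omega)⟩
    · exact ⟨hx, Or.inr (Or.inr ⟨by omega, by omega, hM⟩)⟩

theorem notMem_fixedPts_of_pair_mem {S : Finset ℤ} {t : ℤ} (hM : IsSymmPerfectMatching S M)
    (hjM : {j, t} ∈ M) (hj0 : 0 < j) (ht : 0 < t) : j ∉ fixedPts M := fun h => by
  have := hM.eq_of_mem_of_mem (mem_fixedPts.mp h).2 hjM (by simp : j ∈ _) (by simp)
  rw [pair_eq_pair_iff] at this
  omega

theorem card_fixedPts_openAt (hM : IsSymmPerfectMatching (pmSet (n + 1)) M)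
    (hjM : {j, (n + 1 : ℤ)} ∈ M) (hj0 : 0 < j) :
    (fixedPts (openAt n j M)).card = (fixedPts M).card + 1 := by
  rw [fixedPts_openAt hj0,
    card_insert_of_notMem (notMem_fixedPts_of_pair_mem hM hjM hj0 (by omega))]

/-- A fixed block `{-x, x}` of `M` with `j < x` would cross `{j, n + 1}`. -/
theorem isGreatest_fixedPts_openAt (h : IsNCSP (n + 1) M) (hjM : {j, (n + 1 : ℤ)} ∈ M)
    (hj0 : 0 < j) : IsGreatest (fixedPts (openAt n j M) : Set ℤ) j := by
  obtain ⟨hM, hnc⟩ := isNCSP_iff.mp h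
  rw [fixedPts_openAt hj0, coe_insert]
  refine ⟨Set.mem_insert _ _, ?_⟩
  rintro x (rfl | hx)
  · rfl
  obtain ⟨hx0, hxM⟩ := mem_fixedPts.mp hx
  by_contra hjx
  have hxN : x ≠ n + 1 := by
    rintro rfl
    have := hM.eq_of_pair_mem_of_pair_mem hjM (by rwa [pair_comm] at hxM)
    omega
  refine not_straddles_of_pair_mem hnc hjM hxM (fun y hy => ?_)
    ⟨-x, by simp, x, by simp, by omega, by omega⟩
  have := mem_pmSet.mp (hM.mem_of_mem hxM hy)
  simp only [mem_insert, mem_singleton] at hy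
  push_cast at this
  omega

theorem openAt_closeAt (hM : IsSymmPerfectMatching (pmSet n) M) (hj : j ∈ fixedPts M) :
    openAt n j (closeAt n j M) = M := by
  obtain ⟨hj0, hjM⟩ := mem_fixedPts.mp hj
  rw [closeAt, openAt, eraseWithNeg_insertWithNeg, insertWithNeg_eraseWithNeg hjM]
  · simpa [pair_comm] using hjM
  · exact fun h => hM.notMem_of_top_mem (by simp) (eraseWithNeg_subset h)
  · exact fun h => hM.notMem_of_top_mem (by simp) (hM.neg_mem _ (eraseWithNeg_subset h))

theorem closeAt_openAt (hM : IsSymmPerfectMatching (pmSet (n + 1)) M) (hjM : {j, (n + 1 : ℤ)} ∈ M)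
    (hj0 : 0 < j) : closeAt n j (openAt n j M) = M := by
  have hfix : ({-j, j} : Finset ℤ) ∉ M := fun h =>
    notMem_fixedPts_of_pair_mem hM hjM hj0 (by omega) (mem_fixedPts.mpr ⟨hj0, h⟩)
  rw [openAt, closeAt, eraseWithNeg_insertWithNeg,
    insertWithNeg_eraseWithNeg hjM (hM.neg_mem _ hjM)]
  · exact fun h => hfix (eraseWithNeg_subset h)
  · exact fun h => hfix (by simpa [pair_comm] using eraseWithNeg_subset h)

theorem topPair_notMem_closeAt (h : IsNCSP n M) (hj : IsGreatest (fixedPts M : Set ℤ) j) :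
    topPair n ∉ closeAt n j M := fun htop => by
  have := (isNCSP_iff.mp (isNCSP_closeAt h hj)).1.eq_of_pair_mem_of_pair_mem htop
    (mem_insertWithNeg.mpr (Or.inl rfl))
  have := (mem_fixedPts.mp hj.1).1
  omega

theorem eq_of_closeAt_eq {M₁ M₂ : Finset (Finset ℤ)} {j₁ j₂ : ℤ} (h₁ : IsNCSP n M₁)
    (h₂ : IsNCSP n M₂) (hj₁ : IsGreatest (fixedPts M₁ : Set ℤ) j₁)
    (hj₂ : IsGreatest (fixedPts M₂ : Set ℤ) j₂) (h : closeAt n j₁ M₁ = closeAt n j₂ M₂) :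
    M₁ = M₂ := by
  have hj : j₁ = j₂ := by
    refine (isNCSP_iff.mp (isNCSP_closeAt h₂ hj₂)).1.eq_of_pair_mem_of_pair_mem ?_
      (mem_insertWithNeg.mpr (Or.inl rfl))
    exact h ▸ mem_insertWithNeg.mpr (Or.inl rfl)
  rw [← openAt_closeAt (isNCSP_iff.mp h₁).1 hj₁.1, ← openAt_closeAt (isNCSP_iff.mp h₂).1 hj₂.1,
    h, hj]

theorem exists_pair_top_mem (h : IsNCSP (n + 1) M) (htop : topPair n ∉ M) :
    ∃ j, 0 < j ∧ {j, (n + 1 : ℤ)} ∈ M := by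
  obtain ⟨hM, hnc⟩ := isNCSP_iff.mp h
  obtain ⟨B, hB, hNB⟩ := hM.exists_mem (x := (n + 1 : ℤ)) (by simp; omega)
  obtain ⟨j, hjB, hjN⟩ := exists_mem_ne (by rw [hM.card_eq_two B hB]; omega) (n + 1 : ℤ)
  have hBj : B = {j, (n + 1 : ℤ)} := hM.eq_pair hB hjB hNB hjN
  have hj := mem_pmSet.mp (hM.mem_of_mem hB hjB)
  refine ⟨j, ?_, hBj ▸ hB⟩
  by_contra hj0
  have := hM.eq_neg_of_neg_of_pos hnc hB hjB hNB (by omega) (by omega)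
  rw [topPair, show -(n + 1 : ℤ) = j by omega, ← hBj] at htop
  exact htop hB

end Operations

theorem finite_setOf_isNCSP (n : ℕ) : {M | IsNCSP n M}.Finite :=
  (pmSet n).powerset.powerset.finite_toSet.subset fun _ hM =>
    mem_coe.mpr <| mem_powerset.mpr fun _ hB =>
      mem_powerset.mpr fun _ hx => (isNCSP_iff.mp hM).1.mem_of_mem hB hx

theorem isNCSP_zero_iff {M : Finset (Finset ℤ)} : IsNCSP 0 M ↔ M = ∅ := by
  have hpm : pmSet 0 = ∅ := by ext x; simp; omega
  constructor
  · intro h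
    obtain ⟨hM, -⟩ := isNCSP_iff.mp h
    refine eq_empty_of_forall_notMem fun B hB => ?_
    obtain ⟨x, hx⟩ := card_pos.mp (by rw [hM.card_eq_two B hB]; omega : 0 < B.card)
    simpa [hpm] using hM.mem_of_mem hB hx
  · rintro rfl
    refine ⟨?_, ?_, ?_, ?_, ?_⟩ <;> simp [hpm]

def atLeastFixed (n k : ℕ) : Set (Finset (Finset ℤ)) := {M | IsNCSP n M ∧ k ≤ (fixedPts M).card}

section Counting

variable {n k : ℕ}

theorem atLeastFixed_zero : atLeastFixed 0 k = if k = 0 then {∅} else ∅ := by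
  ext M
  split_ifs with hk
  · simp [atLeastFixed, isNCSP_zero_iff, hk]
  · simp only [Set.mem_empty_iff_false, iff_false]
    rintro ⟨h₀, h⟩
    rw [isNCSP_zero_iff.mp h₀] at h
    simp [fixedPts] at h
    omega

theorem ncard_atLeastFixed_inter :
    (atLeastFixed (n + 1) k ∩ {M | topPair n ∈ M}).ncard = (atLeastFixed n (k - 1)).ncard := by
  refine (Set.ncard_congr (fun M _ => insertWithNeg (topPair n) M) ?_ ?_ ?_).symm
  · rintro M ⟨hM, hk⟩
    refine ⟨⟨isNCSP_insertWithNeg_top hM, ?_⟩, mem_insertWithNeg.mpr (Or.inl rfl)⟩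
    rw [card_fixedPts_insertWithNeg_top (isNCSP_iff.mp hM).1]
    omega
  · rintro M₁ M₂ ⟨hM₁, -⟩ ⟨hM₂, -⟩ h
    have hM₁ := (isNCSP_iff.mp hM₁).1
    have hM₂ := (isNCSP_iff.mp hM₂).1
    rw [← eraseWithNeg_insertWithNeg (hM₁.notMem_of_top_mem (B := topPair n) (by simp))
      (hM₁.notMem_of_top_mem (B := -topPair n) (by simp)), h,
      eraseWithNeg_insertWithNeg (hM₂.notMem_of_top_mem (B := topPair n) (by simp))
      (hM₂.notMem_of_top_mem (B := -topPair n) (by simp))]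
  · rintro M ⟨⟨hM, hk⟩, htop⟩
    have hM' := isNCSP_eraseWithNeg_top hM htop
    have hadd := insertWithNeg_eraseWithNeg htop ((isNCSP_iff.mp hM).1.neg_mem _ htop)
    refine ⟨_, ⟨hM', ?_⟩, hadd⟩
    rw [← hadd, card_fixedPts_insertWithNeg_top (isNCSP_iff.mp hM').1] at hk
    omega

theorem ncard_atLeastFixed_diff :
    (atLeastFixed (n + 1) k \ {M | topPair n ∈ M}).ncard = (atLeastFixed n (k + 1)).ncard := by
  have hne : ∀ M ∈ atLeastFixed n (k + 1), (fixedPts M).Nonempty := fun M hM =>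
    card_pos.mp (by have := hM.2; omega)
  refine (Set.ncard_congr (fun M hM => closeAt n ((fixedPts M).max' (hne M hM)) M) ?_ ?_ ?_).symm
  · rintro M hM
    have hmax := isGreatest_max' _ (hne M hM)
    refine ⟨⟨isNCSP_closeAt hM.1 hmax, ?_⟩, topPair_notMem_closeAt hM.1 hmax⟩
    rw [card_fixedPts_closeAt hmax.1]
    have := hM.2
    omega
  · intro M₁ M₂ hM₁ hM₂ h
    exact eq_of_closeAt_eq hM₁.1 hM₂.1 (isGreatest_max' _ _) (isGreatest_max' _ _) h
  · rintro M ⟨⟨hM, hk⟩, htop⟩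
    obtain ⟨j, hj0, hjM⟩ := exists_pair_top_mem hM htop
    have hM' := isNCSP_openAt hM hjM hj0
    have hcard := card_fixedPts_openAt (isNCSP_iff.mp hM).1 hjM hj0
    refine ⟨openAt n j M, ⟨hM', by omega⟩, ?_⟩
    rw [(isGreatest_max' _ _).unique (isGreatest_fixedPts_openAt hM hjM hj0),
      closeAt_openAt (isNCSP_iff.mp hM).1 hjM hj0]

theorem ncard_atLeastFixed_succ :
    (atLeastFixed (n + 1) k).ncard =
      (atLeastFixed n (k - 1)).ncard + (atLeastFixed n (k + 1)).ncard := by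
  rw [← ncard_atLeastFixed_inter, ← ncard_atLeastFixed_diff,
    Set.ncard_inter_add_ncard_sdiff_eq_ncard _ _
      ((finite_setOf_isNCSP (n + 1)).subset fun _ hM => hM.1)]

theorem succ_choose_half_eq_add (n k : ℕ) :
    (n + 1).choose ((n + 1 + k + 1) / 2) =
      n.choose ((n + (k - 1) + 1) / 2) + n.choose ((n + (k + 1) + 1) / 2) := by
  rcases k with _ | k
  · obtain ⟨a, rfl | rfl⟩ := Nat.even_or_odd' n
    · rw [show (2 * a + 1 + 0 + 1) / 2 = a + 1 by omega,
        show (2 * a + (0 - 1) + 1) / 2 = a by omega, Nat.choose_succ_succ']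
    · rw [show (2 * a + 1 + 1 + 0 + 1) / 2 = a + 1 by omega,
        show (2 * a + 1 + (0 - 1) + 1) / 2 = a + 1 by omega, Nat.choose_succ_succ',
        ← Nat.choose_symm_half]
  · rw [show (n + 1 + (k + 1) + 1) / 2 = (n + k + 1) / 2 + 1 by omega,
      show (n + (k + 1 - 1) + 1) / 2 = (n + k + 1) / 2 by omega,
      show (n + (k + 1 + 1) + 1) / 2 = (n + k + 1) / 2 + 1 by omega, Nat.choose_succ_succ']

theorem ncard_atLeastFixed (n k : ℕ) : (atLeastFixed n k).ncard = n.choose ((n + k + 1) / 2) := by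
  induction n generalizing k with
  | zero =>
    rw [atLeastFixed_zero]
    split_ifs with hk
    · simp [hk]
    · rw [Set.ncard_empty, Nat.choose_eq_zero_of_lt (by omega)]
  | succ n ih => rw [ncard_atLeastFixed_succ, ih, ih, succ_choose_half_eq_add]

end Counting

/-- The number of noncrossing symmetric perfect matchings on `{±1, ..., ±n}` is the
central binomial coefficient `C(n, ⌊n/2⌋)`. -/
theorem card_NCSP (n : ℕ) :
    Set.ncard {M : Finset (Finset ℤ) | IsNCSP n M} = Nat.choose n (n / 2) := by
  have h := ncard_atLeastFixed n 0
  simp only [atLeastFixed, zero_le, and_true, add_zero] at h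
  rw [h, ← Nat.choose_symm (Nat.div_le_self n 2)]
  congr 1
  omega
end

section
/- Let G be a finite bipartite directed graph with vertex bipartition V = V⁻ ⊔ V⁺ such that every interior vertex (neither a source nor a sink) in V⁺ has indegree equal to outdegree. Let f : V → A be a function to an abelian group such that for every v ∈ V⁻, the sum of f over out-neighbors of v minus the sum of f over in-neighbors of v is zero, and also f(v) = 0. Then the sum over sinks u of deg(u)·f(u) equals the sum over sources u of deg(u)·f(u), where deg is total degree. -/
/-- The indegree of a vertex of a directed multigraph with edge set `E`,
source map `src` and target map `tgt`. -/
def inDeg {V E : Type*} [Fintype E] [DecidableEq V] (tgt : E → V) (v : V) : ℕ :=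
  (Finset.univ.filter fun e => tgt e = v).card

/-- The outdegree of a vertex of a directed multigraph. -/
def outDeg {V E : Type*} [Fintype E] [DecidableEq V] (src : E → V) (v : V) : ℕ :=
  (Finset.univ.filter fun e => src e = v).card

/-!
Count `∑ₑ (f (tgt e) - f (src e))` in two ways. Grouped by vertices it is
`∑ᵥ (inDeg v - outDeg v) • f v`, and since every vertex is a source, a sink, balanced, or
killed by `f`, this is the sink sum minus the source sum. On the other hand each edge has
exactly one endpoint in `V⁻`, where `f` vanishes; grouping the edges by that endpoint gives
the sum over `v ∈ V⁻` of the differences assumed to vanish.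
-/

open Finset

section Fiberwise

variable {ι κ M : Type*} [Fintype κ] [DecidableEq κ] [AddCommMonoid M]

theorem Finset.sum_card_fiber_nsmul (s : Finset ι) (g : ι → κ) (φ : κ → M) :
    ∑ j, #{i ∈ s | g i = j} • φ j = ∑ i ∈ s, φ (g i) := by
  simp_rw [← sum_const, sum_fiberwise' s g φ]

theorem Finset.sum_eq_sum_filter_fiberwise (s : Finset ι) (g : ι → κ) (p : κ → Prop)
    [DecidablePred p] (h : ι → M) (hz : ∀ i ∈ s, ¬ p (g i) → h i = 0) :
    ∑ i ∈ s, h i = ∑ j with p j, ∑ i ∈ s with g i = j, h i := by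
  rw [← sum_fiberwise s g h, sum_filter_of_ne]
  intro j _ hj
  by_contra hpj
  exact hj (sum_eq_zero fun i hi => by
    rw [mem_filter] at hi
    exact hz i hi.1 (hi.2 ▸ hpj))

end Fiberwise

theorem nsmul_sub_nsmul_eq_ite_sub_ite {A : Type*} [AddCommGroup A] {a b : ℕ} (x : A)
    (h : a = b ∨ a = 0 ∨ b = 0) :
    a • x - b • x
      = (if b = 0 then (a + b) • x else 0) - (if a = 0 then (a + b) • x else 0) := by
  rcases h with rfl | rfl | rfl
  · by_cases ha : a = 0 <;> simp [ha]
  · by_cases hb : b = 0 <;> simp [hb]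
  · by_cases ha : a = 0 <;> simp [ha]

section DirectedMultigraph

variable {V E A : Type*} [Fintype V] [Fintype E] [DecidableEq V] [AddCommGroup A]

theorem sum_inDeg_nsmul_sub_sum_outDeg_nsmul (src tgt : E → V) (φ : V → A) :
    ∑ v, inDeg tgt v • φ v - ∑ v, outDeg src v • φ v = ∑ e, φ (tgt e) - ∑ e, φ (src e) := by
  simp only [inDeg, outDeg, sum_card_fiber_nsmul]

theorem sum_tgt_sub_sum_src_of_bipartite (src tgt : E → V) (Vm : V → Prop) [DecidablePred Vm]
    (hbip : ∀ e, Vm (src e) ↔ ¬ Vm (tgt e)) (f : V → A) (hf : ∀ v, Vm v → f v = 0) :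
    ∑ e, f (tgt e) - ∑ e, f (src e)
      = ∑ v with Vm v, (∑ e with src e = v, f (tgt e) - ∑ e with tgt e = v, f (src e)) := by
  rw [sum_sub_distrib,
    sum_eq_sum_filter_fiberwise _ src Vm _ fun e _ he => hf _ (not_not.mp (he ∘ (hbip e).mpr)),
    sum_eq_sum_filter_fiberwise _ tgt Vm _ fun e _ he => hf _ ((hbip e).mpr he)]

end DirectedMultigraph

/-- Let `G` be a finite bipartite directed (multi)graph with vertex bipartition
`V = V⁻ ⊔ V⁺` (here `Vm v` means `v ∈ V⁻`), such that every interior vertex of `V⁺`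
(one with positive indegree and positive outdegree) has indegree equal to outdegree.
Let `f : V → A` be a function to an abelian group such that for every `v ∈ V⁻` the sum
of `f` over out-neighbors of `v` minus the sum over in-neighbors of `v` vanishes, and
`f v = 0`.  Then `∑_{sinks u} deg(u) • f(u) = ∑_{sources u} deg(u) • f(u)`,
where `deg` is indegree plus outdegree. -/
theorem transition_graph_sum {V E A : Type*} [Fintype V] [Fintype E] [DecidableEq V]
    [AddCommGroup A] (src tgt : E → V) (Vm : V → Prop)
    (hbip : ∀ e : E, Vm (src e) ↔ ¬ Vm (tgt e))
    (hplus : ∀ v : V, ¬ Vm v → 0 < inDeg tgt v → 0 < outDeg src v →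
      inDeg tgt v = outDeg src v)
    (f : V → A)
    (hminus : ∀ v : V, Vm v →
      (∑ e ∈ Finset.univ.filter fun e => src e = v, f (tgt e))
          - (∑ e ∈ Finset.univ.filter fun e => tgt e = v, f (src e)) = 0
        ∧ f v = 0) :
    ∑ v ∈ Finset.univ.filter fun v => outDeg src v = 0,
        (inDeg tgt v + outDeg src v) • f v
      = ∑ v ∈ Finset.univ.filter fun v => inDeg tgt v = 0,
          (inDeg tgt v + outDeg src v) • f v := by
  classical
  have hvertex : ∀ v, inDeg tgt v • f v - outDeg src v • f v
      = (if outDeg src v = 0 then (inDeg tgt v + outDeg src v) • f v else 0)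
        - (if inDeg tgt v = 0 then (inDeg tgt v + outDeg src v) • f v else 0) := by
    intro v
    by_cases hv : Vm v
    · simp [(hminus v hv).2]
    · refine nsmul_sub_nsmul_eq_ite_sub_ite _ ?_
      by_contra! h
      exact h.1 (hplus v hv (Nat.pos_of_ne_zero h.2.1) (Nat.pos_of_ne_zero h.2.2))
  rw [← sub_eq_zero, sum_filter, sum_filter, ← sum_sub_distrib,
    ← sum_congr rfl fun v _ => hvertex v, sum_sub_distrib,
    sum_inDeg_nsmul_sub_sum_outDeg_nsmul,
    sum_tgt_sub_sum_src_of_bipartite src tgt Vm hbip f fun v hv => (hminus v hv).2]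
  exact sum_eq_zero fun v hv => (hminus v (mem_filter.mp hv).2).1
end

section
/- Let w ∈ C_n with w_1 > 0 and let 2 ≤ j ≤ n. Then ℓ(w·s_{1j}) = ℓ(w) - 1 if and only if w_1 < -w_j and no e ∈ {w_2,...,w_{j-1}} satisfies w_j < e < -w_1. -/
/-!
The Coxeter length of a signed permutation is its type-B inversion number: right multiplication
by a simple generator changes this number by exactly one, and every `w ≠ 1` has a generator
lowering it. Since `w s_{1j}` differs from `w` only at the positions `±1, ±j`, comparing
the two inversion numbers reduces to the pair of positions `{1, j}` and to each `{1, j, k}` for a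
third position `k`. When `w 1 < -w j` the number drops by `1 + 2 #{1 < k < j : w j < w k < -w 1}`;
otherwise it grows.
-/

/-- The negation map on `{-n, ..., n}`, fixing integers of larger absolute value. -/
def negAbs (n : ℕ) : ℤ → ℤ := fun z => if z.natAbs ≤ n then -z else z

lemma negAbs_involutive (n : ℕ) : Function.Involutive (negAbs n) := by
  intro z
  unfold negAbs
  by_cases h : z.natAbs ≤ n
  · simp [h, Int.natAbs_neg]
  · simp [h]

/-- The longest element `w_n^C` of the signed permutation group `C_n`:
the map `i ↦ -i` on `{±1, ..., ±n}`. -/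
def wC (n : ℕ) : Equiv.Perm ℤ := (negAbs_involutive n).toPerm

/-- The simple generators `t_0, t_1, ..., t_{n-1}` of `C_n`. -/
def tgen (n : ℕ) (i : Fin n) : Equiv.Perm ℤ :=
  if i.val = 0 then Equiv.swap (-1) 1
  else Equiv.swap (i : ℤ) ((i : ℤ) + 1) * Equiv.swap (-(i : ℤ) - 1) (-(i : ℤ))

/-- Coxeter length on `C_n`. -/
noncomputable def clen (n : ℕ) (w : Equiv.Perm ℤ) : ℕ :=
  sInf {k | ∃ l : List (Fin n), (l.map (tgen n)).prod = w ∧ l.length = k}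

/-- The Demazure (0-Hecke) product of a word in the simple generators of `C_n`. -/
noncomputable def hecke (n : ℕ) (l : List (Fin n)) : Equiv.Perm ℤ :=
  l.foldl (fun w i => if clen n (w * tgen n i) = clen n w + 1 then w * tgen n i else w) 1

/-- `a` is an involution word for the involution `y ∈ C_n`. -/
noncomputable def IsInvWordC (n : ℕ) (y : Equiv.Perm ℤ) (a : List (Fin n)) : Prop :=
  hecke n (a.reverse ++ a) = y ∧
  ∀ b : List (Fin n), hecke n (b.reverse ++ b) = y → a.length ≤ b.length

/-- `a` is a reduced word for `w ∈ C_n`. -/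
def IsRedWordC (n : ℕ) (w : Equiv.Perm ℤ) (a : List (Fin n)) : Prop :=
  (a.map (tgen n)).prod = w ∧
  ∀ b : List (Fin n), (b.map (tgen n)).prod = w → a.length ≤ b.length

/-- `w` is an atom of the involution `y ∈ C_n`. -/
noncomputable def IsAtomOf (n : ℕ) (y w : Equiv.Perm ℤ) : Prop :=
  ∃ a : List (Fin n), IsInvWordC n y a ∧ (a.map (tgen n)).prod = w

open Equiv Finset

section WordLength

variable {G ι : Type*} [Group G] (t : ι → G) (P : G → Prop) (L : G → ℕ)

theorem list_prod_map_of_mul_closed (hP1 : P 1) (hPt : ∀ w i, P w → P (w * t i)) (l : List ι) :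
    P (l.map t).prod := by
  induction l using List.reverseRecOn with
  | nil => simpa using hP1
  | append_singleton l i ih => simpa using hPt _ i ih

theorem le_length_of_list_prod (hP1 : P 1) (hPt : ∀ w i, P w → P (w * t i)) (hL1 : L 1 = 0)
    (hle : ∀ w i, P w → L (w * t i) ≤ L w + 1) (l : List ι) : L (l.map t).prod ≤ l.length := by
  induction l using List.reverseRecOn with
  | nil => simp [hL1]
  | append_singleton l i ih =>
    simpa using (hle _ i (list_prod_map_of_mul_closed t P hP1 hPt l)).trans (by omega)

theorem exists_list_prod_eq_of_length (hPt : ∀ w i, P w → P (w * t i))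
    (ht2 : ∀ i, t i * t i = 1) (hL1 : L 1 = 0)
    (hdesc : ∀ w, P w → w ≠ 1 → ∃ i, L (w * t i) + 1 = L w) :
    ∀ w, P w → ∃ l : List ι, (l.map t).prod = w ∧ l.length = L w := by
  intro w hw
  induction hN : L w using Nat.strong_induction_on generalizing w with
  | _ N ih =>
    by_cases h1 : w = 1
    · exact ⟨[], by simp [h1], by simp [← hN, h1, hL1]⟩
    obtain ⟨i, hi⟩ := hdesc w hw h1
    obtain ⟨l, hl, hlen⟩ := ih _ (by omega) (w * t i) (hPt w i hw) rfl
    refine ⟨l ++ [i], ?_, by simp [hlen]; omega⟩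
    simp [hl, mul_assoc, ht2]

theorem sInf_length_eq (hP1 : P 1) (hPt : ∀ w i, P w → P (w * t i))
    (ht2 : ∀ i, t i * t i = 1) (hL1 : L 1 = 0) (hle : ∀ w i, P w → L (w * t i) ≤ L w + 1)
    (hdesc : ∀ w, P w → w ≠ 1 → ∃ i, L (w * t i) + 1 = L w) {w : G} (hw : P w) :
    sInf {k | ∃ l : List ι, (l.map t).prod = w ∧ l.length = k} = L w := by
  obtain ⟨l, hl, hlen⟩ := exists_list_prod_eq_of_length t P L hPt ht2 hL1 hdesc w hw
  refine le_antisymm (Nat.sInf_le ⟨l, hl, hlen⟩) ?_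
  obtain ⟨l', hl', hlen'⟩ :=
    Nat.sInf_mem (s := {k | ∃ l : List ι, (l.map t).prod = w ∧ l.length = k}) ⟨_, l, hl, hlen⟩
  rw [← hlen', ← hl']
  exact le_length_of_list_prod t P L hP1 hPt hL1 hle l'

end WordLength

structure IsSignedPerm (n : ℕ) (w : Perm ℤ) : Prop where
  map_neg : ∀ i, w (-i) = -w i
  map_of_lt_abs : ∀ i, (n : ℤ) < |i| → w i = i

namespace IsSignedPerm

variable {n : ℕ} {v w : Perm ℤ}

theorem one : IsSignedPerm n 1 := ⟨fun _ => rfl, fun _ _ => rfl⟩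

theorem mul (hv : IsSignedPerm n v) (hw : IsSignedPerm n w) : IsSignedPerm n (v * w) :=
  ⟨fun i => by simp [hv.map_neg, hw.map_neg],
    fun i hi => by simp [hw.map_of_lt_abs i hi, hv.map_of_lt_abs i hi]⟩

theorem map_zero (hw : IsSignedPerm n w) : w 0 = 0 := by
  have := hw.map_neg 0
  rw [neg_zero] at this
  omega

theorem apply_eq_neg_apply_iff (hw : IsSignedPerm n w) {x y : ℤ} : w x = -w y ↔ x = -y := by
  rw [← hw.map_neg, w.injective.eq_iff]

end IsSignedPerm

section Generators

variable {n : ℕ} (i : Fin n)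

theorem tgen_of_val_eq_zero (h : i.val = 0) : tgen n i = swap (-1) 1 := by
  simp [tgen, h]

theorem tgen_apply_of_val_ne_zero (h : i.val ≠ 0) (x : ℤ) :
    tgen n i x = if x = (i : ℤ) then (i : ℤ) + 1 else if x = (i : ℤ) + 1 then (i : ℤ)
      else if x = -(i : ℤ) then -(i : ℤ) - 1 else if x = -(i : ℤ) - 1 then -(i : ℤ) else x := by
  have : (0 : ℤ) < i := by omega
  simp only [tgen, h, if_false, Perm.mul_apply, swap_apply_def]
  split_ifs <;> omega

theorem tgen_apply_of_pos (h : i.val ≠ 0) {x : ℤ} (hx : 0 < x) :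
    tgen n i x = swap (i : ℤ) ((i : ℤ) + 1) x := by
  rw [tgen_apply_of_val_ne_zero i h, swap_apply_def]
  split_ifs <;> omega

theorem tgen_mul_self : tgen n i * tgen n i = 1 := by
  by_cases h : i.val = 0
  · simp [tgen_of_val_eq_zero i h]
  · ext x
    simp only [Perm.mul_apply, tgen_apply_of_val_ne_zero i h, Perm.one_apply]
    split_ifs <;> omega

theorem isSignedPerm_tgen : IsSignedPerm n (tgen n i) := by
  have hi : (i : ℤ) < n := by exact_mod_cast i.isLt
  by_cases h : i.val = 0
  · rw [tgen_of_val_eq_zero i h]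
    refine ⟨fun x => ?_, fun x hx => ?_⟩ <;> simp only [swap_apply_def] <;>
      [skip; rw [lt_abs] at hx] <;> split_ifs <;> omega
  · refine ⟨fun x => ?_, fun x hx => ?_⟩ <;> simp only [tgen_apply_of_val_ne_zero i h] <;>
      [skip; rw [lt_abs] at hx] <;> split_ifs <;> omega

end Generators

theorem Finset.sum_add_sum_eq_of_eqOn_sdiff {ι M : Type*} [DecidableEq ι] [AddCommMonoid M]
    {s u : Finset ι} (hu : u ⊆ s) {f g : ι → M} (h : ∀ r ∈ s \ u, f r = g r) :
    ∑ r ∈ s, f r + ∑ r ∈ u, g r = ∑ r ∈ s, g r + ∑ r ∈ u, f r := by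
  rw [← sum_sdiff hu (f := f), ← sum_sdiff hu (f := g), sum_congr rfl h]
  abel

section InversionCount

def invIndicator (w : Perm ℤ) (p : ℤ × ℤ) : ℕ :=
  (if p.1 < p.2 ∧ w p.2 < w p.1 then 1 else 0) + (if p.1 ≤ p.2 ∧ w p.1 + w p.2 < 0 then 1 else 0)

/-- The type-B inversion number `#{i < j : w i > w j} + #{i ≤ j : w i + w j < 0}` over
positions `1, ..., n` (Björner–Brenti, Prop. 8.1.1). -/
noncomputable def invCount (n : ℕ) (w : Perm ℤ) : ℕ :=
  ∑ p ∈ Icc (1 : ℤ) n ×ˢ Icc (1 : ℤ) n, invIndicator w p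

variable {n : ℕ} {w : Perm ℤ}

theorem invIndicator_of_lt {x y : ℤ} (h : x < y) :
    invIndicator w (x, y) = (if w y < w x then 1 else 0) + (if w y < -w x then 1 else 0) := by
  simp only [invIndicator, h, h.le, true_and]
  congr 2
  exact propext (by omega)

theorem invIndicator_of_gt {x y : ℤ} (h : y < x) : invIndicator w (x, y) = 0 := by
  simp [invIndicator, h.not_gt, h.not_ge]

theorem invIndicator_self (x : ℤ) : invIndicator w (x, x) = if w x < 0 then 1 else 0 := by
  simp only [invIndicator, lt_irrefl, false_and, if_false, le_refl, true_and, zero_add]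
  congr 1
  exact propext (by omega)

theorem invCount_one : invCount n 1 = 0 :=
  sum_eq_zero fun p hp => by
    simp only [mem_product, mem_Icc] at hp
    rw [invIndicator, if_neg (by simp only [Perm.one_apply]; omega),
      if_neg (by simp only [Perm.one_apply]; omega)]
    rfl

theorem invCount_mul_tgen_of_val_eq_zero (hw : IsSignedPerm n w) (i : Fin n) (h : i.val = 0)
    (hpos : 0 < w 1) : invCount n (w * tgen n i) = invCount n w + 1 := by
  have hn : (1 : ℤ) ≤ n := by have := i.pos; omega
  have hv : ∀ x, (w * tgen n i) x = if x = 1 then -w 1 else if x = -1 then w 1 else w x := by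
    intro x
    simp only [Perm.mul_apply, tgen_of_val_eq_zero i h, swap_apply_def]
    split_ifs <;> simp_all [hw.map_neg]
  -- Only the diagonal pair `(1, 1)` changes: the two indicators of each pair `(1, y)` trade places.
  have key := sum_add_sum_eq_of_eqOn_sdiff (s := Icc (1 : ℤ) n ×ˢ Icc (1 : ℤ) n)
    (u := {(1, 1)}) (f := invIndicator (w * tgen n i)) (g := invIndicator w)
    (by simpa using hn) (by
      rintro ⟨x, y⟩ hp
      simp only [mem_sdiff, mem_product, mem_Icc, mem_singleton, Prod.mk.injEq] at hp
      simp only [invIndicator, hv]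
      split_ifs <;> subst_vars <;> omega)
  simp only [sum_singleton, invIndicator_self, hv, if_true] at key
  unfold invCount
  split_ifs at key <;> omega

theorem invCount_mul_tgen_of_lt (i : Fin n) (h : i.val ≠ 0) (hasc : w i < w (i + 1)) :
    invCount n (w * tgen n i) = invCount n w + 1 := by
  set m : ℤ := (i : ℤ)
  have hm : 1 ≤ m ∧ m + 1 ≤ n := by omega
  set σ := swap m (m + 1)
  have hv : ∀ x, 1 ≤ x → (w * tgen n i) (σ x) = w x := by
    intro x hx
    rw [Perm.mul_apply,
      tgen_apply_of_pos i h (by simp only [σ, swap_apply_def]; split_ifs <;> omega),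
      swap_apply_self]
  -- `w * tgen n i` composed with `σ` is `w` on positive integers, so after reindexing by `σ × σ`
  -- only the pairs `(m, m + 1)` and `(m + 1, m)` contribute differently.
  have reindex : invCount n (w * tgen n i) =
      ∑ p ∈ Icc (1 : ℤ) n ×ˢ Icc (1 : ℤ) n, invIndicator (w * tgen n i) (σ p.1, σ p.2) :=
    (sum_equiv (σ.prodCongr σ) (fun ⟨x, y⟩ => by
      simp only [mem_product, mem_Icc, prodCongr_apply, Prod.map, σ, swap_apply_def]
      split_ifs <;> omega) (fun _ _ => rfl)).symm
  have key := sum_add_sum_eq_of_eqOn_sdiff (s := Icc (1 : ℤ) n ×ˢ Icc (1 : ℤ) n)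
    (u := {(m, m + 1), (m + 1, m)}) (f := fun p => invIndicator (w * tgen n i) (σ p.1, σ p.2))
    (g := invIndicator w)
    (by simp only [insert_subset_iff, singleton_subset_iff, mem_product, mem_Icc]; omega) (by
      rintro ⟨x, y⟩ hp
      simp only [mem_sdiff, mem_product, mem_Icc, mem_insert, mem_singleton,
        Prod.mk.injEq] at hp
      simp only [invIndicator, hv x hp.1.1.1, hv y hp.1.2.1]
      congr 2 <;> simp only [σ, swap_apply_def] <;> split_ifs <;> simp <;> omega)
  have hvm : (w * tgen n i) m = w (m + 1) := by simpa [σ] using hv (m + 1) (by omega)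
  have hvm1 : (w * tgen n i) (m + 1) = w m := by simpa [σ] using hv m hm.1
  rw [sum_pair (by simp), sum_pair (by simp)] at key
  simp only [show σ m = m + 1 from swap_apply_left _ _,
    show σ (m + 1) = m from swap_apply_right _ _] at key
  simp only [invIndicator_of_lt (by omega : m < m + 1),
    invIndicator_of_gt (by omega : m < m + 1), hvm, hvm1] at key
  rw [reindex, invCount]
  split_ifs at key <;> omega

end InversionCount

section Descents

variable {n : ℕ} {w : Perm ℤ}

theorem IsSignedPerm.apply_one_ne_zero (hw : IsSignedPerm n w) : w 1 ≠ 0 := fun h =>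
  one_ne_zero (w.injective (h.trans hw.map_zero.symm))

theorem invCount_mul_tgen_of_val_eq_zero_of_neg (hw : IsSignedPerm n w) (i : Fin n)
    (h : i.val = 0) (hneg : w 1 < 0) : invCount n (w * tgen n i) + 1 = invCount n w := by
  have hv1 : (w * tgen n i) 1 = -w 1 := by
    rw [Perm.mul_apply, tgen_of_val_eq_zero i h, swap_apply_right, hw.map_neg]
  have := invCount_mul_tgen_of_val_eq_zero (hw.mul (isSignedPerm_tgen i)) i h (by omega)
  rwa [mul_assoc, tgen_mul_self, mul_one, eq_comm] at this

theorem invCount_mul_tgen_of_gt (i : Fin n) (h : i.val ≠ 0) (hdesc : w (i + 1) < w i) :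
    invCount n (w * tgen n i) + 1 = invCount n w := by
  have hpos : (0 : ℤ) < i := by omega
  have := invCount_mul_tgen_of_lt (w := w * tgen n i) i h (by
    simpa [tgen_apply_of_pos i h hpos, tgen_apply_of_pos i h (by omega : (0 : ℤ) < i + 1)]
      using hdesc)
  rwa [mul_assoc, tgen_mul_self, mul_one, eq_comm] at this

theorem invCount_mul_tgen_le (hw : IsSignedPerm n w) (i : Fin n) :
    invCount n (w * tgen n i) ≤ invCount n w + 1 := by
  by_cases h : i.val = 0
  · rcases hw.apply_one_ne_zero.lt_or_gt with hneg | hpos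
    · have := invCount_mul_tgen_of_val_eq_zero_of_neg hw i h hneg
      omega
    · exact (invCount_mul_tgen_of_val_eq_zero hw i h hpos).le
  · rcases (w.injective.ne (by omega : (i : ℤ) ≠ i + 1)).lt_or_gt with hasc | hdesc
    · exact (invCount_mul_tgen_of_lt i h hasc).le
    · have := invCount_mul_tgen_of_gt i h hdesc
      omega

theorem apply_eq_self_of_forall_lt_apply_add_one {f : ℤ → ℤ} {a b : ℤ}
    (hf : ∀ m, a ≤ m → m < b → f m < f (m + 1)) (ha : a ≤ f a) (hb : f b ≤ b) {m : ℤ}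
    (ham : a ≤ m) (hmb : m ≤ b) : f m = m := by
  have hg : MonotoneOn (fun k => f k - k) (Set.Icc a b) :=
    monotoneOn_of_le_add_one Set.ordConnected_Icc fun k _ hk hk1 => by
      have := hf k hk.1 (by simp only [Set.mem_Icc] at hk1; omega)
      omega
  have hlow := hg ⟨le_rfl, ham.trans hmb⟩ ⟨ham, hmb⟩ ham
  have hupp := hg ⟨ham, hmb⟩ ⟨ham.trans hmb, le_rfl⟩ hmb
  simp only at hlow hupp
  omega

theorem IsSignedPerm.eq_one_of_forall_lt (hw : IsSignedPerm n w) (h1 : 0 < w 1)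
    (hinc : ∀ m : ℤ, 1 ≤ m → m < n → w m < w (m + 1)) : w = 1 := by
  have hfix : ∀ m : ℤ, 1 ≤ m → m ≤ n → w m = m := fun m hm1 hmn =>
    apply_eq_self_of_forall_lt_apply_add_one hinc h1 (by
      by_contra! hn
      have := w.injective (hw.map_of_lt_abs (w n) (by rw [lt_abs]; omega))
      omega) hm1 hmn
  ext x
  rcases lt_or_ge (n : ℤ) |x| with hx | hx
  · exact hw.map_of_lt_abs x hx
  rw [abs_le] at hx
  rcases lt_trichotomy x 0 with hneg | rfl | hpos
  · simpa [hw.map_neg] using congrArg Neg.neg (hfix (-x) (by omega) (by omega))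
  · exact hw.map_zero
  · exact hfix x hpos hx.2

theorem IsSignedPerm.exists_invCount_mul_tgen_add_one_eq (hw : IsSignedPerm n w) (hne : w ≠ 1) :
    ∃ i : Fin n, invCount n (w * tgen n i) + 1 = invCount n w := by
  by_contra! h
  refine hne (hw.eq_one_of_forall_lt ?_ fun m hm1 hmn => ?_)
  · refine hw.apply_one_ne_zero.lt_or_gt.resolve_left fun hneg => ?_
    have hn : 0 < n := by
      by_contra! hn0
      have := hw.map_of_lt_abs 1 (by rw [abs_one]; omega)
      omega
    exact h ⟨0, hn⟩ (invCount_mul_tgen_of_val_eq_zero_of_neg hw _ rfl hneg)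
  · by_contra! hdesc
    have hm : ((⟨m.toNat, by omega⟩ : Fin n) : ℤ) = m := Int.toNat_of_nonneg (by omega)
    refine h ⟨m.toNat, by omega⟩ (invCount_mul_tgen_of_gt _ (by omega) ?_)
    rw [hm]
    exact hdesc.lt_of_ne (w.injective.ne (by omega))

theorem clen_eq_invCount (hw : IsSignedPerm n w) : clen n w = invCount n w :=
  sInf_length_eq (tgen n) (IsSignedPerm n) (invCount n) IsSignedPerm.one
    (fun _ i hw => hw.mul (isSignedPerm_tgen i)) tgen_mul_self invCount_one
    (fun _ i hw => invCount_mul_tgen_le hw i)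
    (fun _ hw hne => hw.exists_invCount_mul_tgen_add_one_eq hne) hw

end Descents

section Reflection

def sRefl (i j : ℤ) : Perm ℤ := swap i (-j) * swap (-i) j

variable {n : ℕ} {i j : ℤ}

theorem sRefl_apply_left (hi : 0 < i) (hij : i < j) : sRefl i j i = -j := by
  simp only [sRefl, Perm.mul_apply, swap_apply_def]
  split_ifs <;> omega

theorem sRefl_apply_right (hi : 0 < i) (hij : i < j) : sRefl i j j = -i := by
  simp only [sRefl, Perm.mul_apply, swap_apply_def]
  split_ifs <;> omega

theorem sRefl_apply_of_ne {x : ℤ} (hxi : x ≠ i) (hxi' : x ≠ -i) (hxj : x ≠ j) (hxj' : x ≠ -j) :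
    sRefl i j x = x := by
  simp only [sRefl, Perm.mul_apply, swap_apply_def]
  split_ifs <;> omega

theorem isSignedPerm_sRefl (hi : 0 < i) (hij : i < j) (hjn : j ≤ n) :
    IsSignedPerm n (sRefl i j) := by
  refine ⟨fun x => ?_, fun x hx => ?_⟩ <;> simp only [sRefl, Perm.mul_apply, swap_apply_def] <;>
    [skip; rw [lt_abs] at hx] <;> split_ifs <;> omega

end Reflection

theorem Finset.sum_product_insert_self {α M : Type*} [DecidableEq α] [AddCommMonoid M]
    {s : Finset α} {a : α} (ha : a ∉ s) (f : α × α → M) :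
    ∑ p ∈ insert a s ×ˢ insert a s, f p =
      f (a, a) + ∑ k ∈ s, (f (a, k) + f (k, a)) + ∑ p ∈ s ×ˢ s, f p := by
  simp only [sum_product, sum_insert ha, sum_add_distrib]
  abel

section ReflectionLength

def pairCount (w : Perm ℤ) (x y : ℤ) : ℕ := invIndicator w (x, y) + invIndicator w (y, x)

def cornerCount (w : Perm ℤ) (j : ℤ) : ℕ :=
  invIndicator w (1, 1) + pairCount w 1 j + invIndicator w (j, j)

def crossCount (w : Perm ℤ) (j k : ℤ) : ℕ := pairCount w 1 k + pairCount w j k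

variable {n : ℕ} {w : Perm ℤ} {j k : ℤ}

theorem pairCount_of_lt {x y : ℤ} (h : x < y) :
    pairCount w x y = (if w y < w x then 1 else 0) + (if w y < -w x then 1 else 0) := by
  rw [pairCount, invIndicator_of_lt h, invIndicator_of_gt h, add_zero]

theorem pairCount_comm (x y : ℤ) : pairCount w x y = pairCount w y x := add_comm _ _

theorem invCount_eq_cornerCount_add (u : Perm ℤ) (hj : 2 ≤ j) (hjn : j ≤ n) :
    invCount n u = cornerCount u j + ∑ k ∈ (Icc 2 (n : ℤ)).erase j, crossCount u j k +
      ∑ p ∈ (Icc 2 (n : ℤ)).erase j ×ˢ (Icc 2 (n : ℤ)).erase j, invIndicator u p := by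
  have hIcc : Icc 1 (n : ℤ) = insert 1 (insert j ((Icc 2 (n : ℤ)).erase j)) := by
    ext x
    simp only [mem_Icc, mem_insert, mem_erase]
    omega
  rw [invCount, hIcc, sum_product_insert_self (by simp; omega),
    sum_product_insert_self (by simp), sum_insert (by simp)]
  simp only [cornerCount, crossCount, pairCount, sum_add_distrib]
  abel

theorem IsSignedPerm.apply_ne_apply_and_ne_neg (hw : IsSignedPerm n w) {x y : ℤ} (hx : 0 < x)
    (hy : 0 < y) (hxy : x ≠ y) : w x ≠ w y ∧ w x ≠ -w y :=
  ⟨w.injective.ne hxy, fun h => by have := hw.apply_eq_neg_apply_iff.1 h; omega⟩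

theorem cornerCount_eq_cornerCount_mul_sRefl_add_one (hw : IsSignedPerm n w) (hj : 1 < j)
    (hpos : 0 < w 1) (hdesc : w j < -w 1) :
    cornerCount w j = cornerCount (w * sRefl 1 j) j + 1 := by
  have := hw.apply_ne_apply_and_ne_neg one_pos (by omega) hj.ne
  simp only [cornerCount, pairCount_of_lt hj, invIndicator_self, Perm.mul_apply,
    sRefl_apply_left one_pos hj, sRefl_apply_right one_pos hj, hw.map_neg]
  split_ifs <;> omega

theorem cornerCount_lt_cornerCount_mul_sRefl (hw : IsSignedPerm n w) (hj : 1 < j)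
    (hpos : 0 < w 1) (hasc : -w 1 < w j) : cornerCount w j < cornerCount (w * sRefl 1 j) j := by
  have := hw.apply_ne_apply_and_ne_neg one_pos (by omega) hj.ne
  simp only [cornerCount, pairCount_of_lt hj, invIndicator_self, Perm.mul_apply,
    sRefl_apply_left one_pos hj, sRefl_apply_right one_pos hj, hw.map_neg]
  split_ifs <;> omega

theorem crossCount_eq_crossCount_mul_sRefl_of_gt (hw : IsSignedPerm n w) (hj : 1 < j)
    (hk : j < k) :
    crossCount w j k = crossCount (w * sRefl 1 j) j k := by
  have h1 := hw.apply_ne_apply_and_ne_neg (by omega) one_pos (by omega : k ≠ 1)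
  have h2 := hw.apply_ne_apply_and_ne_neg (by omega) (by omega) hk.ne'
  simp only [crossCount, pairCount_of_lt (hj.trans hk), pairCount_of_lt hk, Perm.mul_apply,
    sRefl_apply_left one_pos hj, sRefl_apply_right one_pos hj, hw.map_neg,
    sRefl_apply_of_ne (i := 1) (j := j) (x := k) (by omega) (by omega) (by omega) (by omega)]
  split_ifs <;> omega

theorem crossCount_add_eq_crossCount_mul_sRefl_add (hw : IsSignedPerm n w) (hk : 1 < k)
    (hkj : k < j) :
    crossCount w j k + (if -w 1 < w k ∧ w k < w j then 2 else 0) =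
      crossCount (w * sRefl 1 j) j k + (if w j < w k ∧ w k < -w 1 then 2 else 0) := by
  have h1 := hw.apply_ne_apply_and_ne_neg (by omega) one_pos (by omega : k ≠ 1)
  have h2 := hw.apply_ne_apply_and_ne_neg (by omega) (by omega) hkj.ne
  simp only [crossCount, pairCount_comm (x := j), pairCount_of_lt hk, pairCount_of_lt hkj,
    Perm.mul_apply, sRefl_apply_left one_pos (hk.trans hkj),
    sRefl_apply_right one_pos (hk.trans hkj), hw.map_neg,
    sRefl_apply_of_ne (i := 1) (j := j) (x := k) (by omega) (by omega) (by omega) (by omega)]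
  rcases h2.2.lt_or_gt with hkb | hkb <;> rcases h1.2.lt_or_gt with hka | hka <;>
    simp only [hkb, hka, hkb.not_gt, hka.not_gt, true_and, false_and, and_true, and_false,
      if_true, if_false] <;> split_ifs <;> omega

theorem sum_invIndicator_mul_sRefl (hj : 2 ≤ j) :
    ∑ p ∈ (Icc 2 (n : ℤ)).erase j ×ˢ (Icc 2 (n : ℤ)).erase j, invIndicator (w * sRefl 1 j) p =
      ∑ p ∈ (Icc 2 (n : ℤ)).erase j ×ˢ (Icc 2 (n : ℤ)).erase j, invIndicator w p := by
  refine sum_congr rfl fun ⟨x, y⟩ hp => ?_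
  simp only [mem_product, mem_erase, mem_Icc] at hp
  simp only [invIndicator, Perm.mul_apply,
    sRefl_apply_of_ne (i := 1) (j := j) (x := x) (by omega) (by omega) (by omega) (by omega),
    sRefl_apply_of_ne (i := 1) (j := j) (x := y) (by omega) (by omega) (by omega) (by omega)]

theorem invCount_eq_invCount_mul_sRefl_add (hw : IsSignedPerm n w) (hpos : 0 < w 1)
    (hj : 2 ≤ j) (hjn : j ≤ n) (hdesc : w j < -w 1) :
    invCount n w = invCount n (w * sRefl 1 j) + 1 +
      2 * #{k ∈ Ico 2 j | w j < w k ∧ w k < -w 1} := by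
  have hcross : ∑ k ∈ (Icc 2 (n : ℤ)).erase j, crossCount w j k =
      ∑ k ∈ (Icc 2 (n : ℤ)).erase j, crossCount (w * sRefl 1 j) j k +
        2 * #{k ∈ Ico 2 j | w j < w k ∧ w k < -w 1} := by
    have hfilter : {k ∈ Ico 2 j | w j < w k ∧ w k < -w 1} =
        {k ∈ (Icc 2 (n : ℤ)).erase j | k < j ∧ w j < w k ∧ w k < -w 1} := by
      ext k
      simp only [mem_filter, mem_Ico, mem_erase, mem_Icc]
      omega
    rw [hfilter, card_filter, mul_sum, ← sum_add_distrib]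
    refine sum_congr rfl fun k hk => ?_
    simp only [mem_erase, mem_Icc] at hk
    rcases hk.1.lt_or_gt with hkj | hjk
    · have := crossCount_add_eq_crossCount_mul_sRefl_add hw (by omega) hkj
      rw [if_neg (by omega)] at this
      simp only [hkj, true_and]
      split_ifs at this ⊢ <;> omega
    · rw [crossCount_eq_crossCount_mul_sRefl_of_gt hw (by omega) hjk]
      simp [hjk.not_gt]
  rw [invCount_eq_cornerCount_add w hj hjn, invCount_eq_cornerCount_add _ hj hjn,
    cornerCount_eq_cornerCount_mul_sRefl_add_one hw (by omega) hpos hdesc, hcross,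
    sum_invIndicator_mul_sRefl hj]
  ring

theorem invCount_lt_invCount_mul_sRefl (hw : IsSignedPerm n w) (hpos : 0 < w 1)
    (hj : 2 ≤ j) (hjn : j ≤ n) (hasc : -w 1 < w j) :
    invCount n w < invCount n (w * sRefl 1 j) := by
  have hcross : ∑ k ∈ (Icc 2 (n : ℤ)).erase j, crossCount w j k ≤
      ∑ k ∈ (Icc 2 (n : ℤ)).erase j, crossCount (w * sRefl 1 j) j k := by
    refine sum_le_sum fun k hk => ?_
    simp only [mem_erase, mem_Icc] at hk
    rcases hk.1.lt_or_gt with hkj | hjk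
    · have := crossCount_add_eq_crossCount_mul_sRefl_add hw (by omega) hkj
      rw [if_neg (by omega : ¬(w j < w k ∧ w k < -w 1))] at this
      omega
    · exact (crossCount_eq_crossCount_mul_sRefl_of_gt hw (by omega) hjk).le
  rw [invCount_eq_cornerCount_add w hj hjn, invCount_eq_cornerCount_add _ hj hjn,
    sum_invIndicator_mul_sRefl hj]
  have := cornerCount_lt_cornerCount_mul_sRefl hw (by omega) hpos hasc
  omega

end ReflectionLength

/-- Descent criterion for the reflections `s_{1j} = (1,-j)(-1,j)` in `C_n`: for
`w ∈ C_n` with `w_1 > 0` and `2 ≤ j ≤ n`, one has `ℓ(w s_{1j}) = ℓ(w) - 1` if and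
only if `w_1 < -w_j` and no `e ∈ {w_2, ..., w_{j-1}}` satisfies `w_j < e < -w_1`. -/
theorem descent_s1j_iff (n : ℕ) (w : Equiv.Perm ℤ)
    (hsym : ∀ i : ℤ, w (-i) = -(w i))
    (hfix : ∀ i : ℤ, (n : ℤ) < |i| → w i = i)
    (hw1 : 0 < w 1)
    (j : ℤ) (hj1 : 2 ≤ j) (hj2 : j ≤ (n : ℤ)) :
    clen n (w * (Equiv.swap 1 (-j) * Equiv.swap (-1) j)) + 1 = clen n w ↔
      w 1 < -(w j) ∧ ∀ k : ℤ, 2 ≤ k → k < j → ¬ (w j < w k ∧ w k < -(w 1)) := by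
  have hw : IsSignedPerm n w := ⟨hsym, hfix⟩
  change clen n (w * sRefl 1 j) + 1 = clen n w ↔ _
  rw [clen_eq_invCount hw, clen_eq_invCount (hw.mul (isSignedPerm_sRefl one_pos (by omega) hj2))]
  have hne : w j ≠ -w 1 := (hw.apply_ne_apply_and_ne_neg (by omega) one_pos (by omega)).2
  rcases hne.lt_or_gt with hdesc | hasc
  · rw [invCount_eq_invCount_mul_sRefl_add hw hw1 hj1 hj2 hdesc]
    have hblock : #{k ∈ Ico 2 j | w j < w k ∧ w k < -w 1} = 0 ↔
        ∀ k : ℤ, 2 ≤ k → k < j → ¬ (w j < w k ∧ w k < -(w 1)) := by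
      simp [filter_eq_empty_iff]
    rw [← hblock]
    omega
  · have := invCount_lt_invCount_mul_sRefl hw hw1 hj1 hj2 hasc
    omega
end
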